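/- arXiv:2205.09210 — 3 statements merged into one kernel-verified Lean document; each statement's English description precedes it below -/
import Mathlib

section
/- Let H be a digraph, let R be a closed reduced walk of even length in H based at a vertex h, and let P be a reduced walk of even length in H starting at h. If R does not satisfy the IN-zigzag pattern, then at most one of the reduced walks RⁿP ∈ π(H), n ∈ ℤ, satisfies the IN-zigzag pattern. (The analogous statement holds for the OUT-zigzag pattern.) -/
namespace HRecoloring

/-- A digraph: a vertex type together with an arc relation. -/
structure Dgraph (V : Type) where
  Adj : V → V → Prop

variable {V X : Type}

/-- Adjacency in the underlying undirected graph. -/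
def Dgraph.UAdj (G : Dgraph V) (u v : V) : Prop := G.Adj u v ∨ G.Adj v u

/-- A digraph is loopless if it has no arc `v → v`. -/
def Dgraph.Loopless (G : Dgraph V) : Prop := ∀ v, ¬ G.Adj v v

/-- A digraph is reflexive if `v → v` for every vertex `v`. -/
def Dgraph.IsReflexive (G : Dgraph V) : Prop := ∀ v, G.Adj v v

/-- A symmetric digraph, which we identify with an undirected graph. -/
def Dgraph.IsSymmetric (G : Dgraph V) : Prop := ∀ u v, G.Adj u v → G.Adj v u

/-- The underlying undirected graph, as a symmetric digraph. -/
def Dgraph.usym (G : Dgraph V) : Dgraph V := ⟨fun u v => G.UAdj u v⟩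

/-- A (di)graph homomorphism. -/
def IsHom (G : Dgraph V) (H : Dgraph X) (f : V → X) : Prop :=
  ∀ ⦃u v⦄, G.Adj u v → H.Adj (f u) (f v)

/-- A walk from `a` to `b`, encoded by its list of successive vertices.
A walk in a digraph is a walk in its underlying undirected graph. -/
def IsWalk (G : Dgraph V) (a b : V) (l : List V) : Prop :=
  l ≠ [] ∧ l.head? = some a ∧ l.getLast? = some b ∧ l.Chain' G.UAdj

/-- Weak connectivity. -/
def Dgraph.WConn (G : Dgraph V) : Prop := ∀ u v : V, ∃ l, IsWalk G u v l

/-- Concatenation of two walks sharing an endpoint. -/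
def wcomp (l₁ l₂ : List V) : List V := l₁ ++ l₂.tail

/-- Number of edges of a walk. -/
def wlen (l : List V) : ℕ := l.length - 1

/-- One reduction step on walks: delete a backtracking pair `(x y)(y x)` or a
one-edge loop step `(x x)`. -/
def RStep (l l' : List V) : Prop :=
  (∃ (p s : List V) (x y : V), l = p ++ [x, y, x] ++ s ∧ l' = p ++ [x] ++ s) ∨
  (∃ (p s : List V) (x : V), l = p ++ [x, x] ++ s ∧ l' = p ++ [x] ++ s)

/-- Equality of walks in the fundamental groupoid `π(H)`: the equivalence
generated by reduction steps (two walks are equal in `π(H)` iff they reduce to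
the same reduced walk). -/
def PiEq (l l' : List V) : Prop := Relation.EqvGen RStep l l'

/-- A walk is reduced if no reduction step applies to it. -/
def IsReduced (l : List V) : Prop := ∀ l', ¬ RStep l l'

/-- A closed walk is cyclically reduced if it is reduced and its first and last
edges are not inverses of each other. -/
def IsCycReduced (l : List V) : Prop :=
  IsReduced l ∧ ∃ h : 2 ≤ l.length,
    l.get ⟨1, by omega⟩ ≠ l.get ⟨l.length - 2, by omega⟩

/-- `n`-fold concatenation of a closed walk `R` based at `h`. -/
def witer (R : List V) (h : V) : ℕ → List V
  | 0 => [h]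
  | n + 1 => wcomp R (witer R h n)

/-- `Rⁿ` for an integer `n`, for a closed walk `R` based at `h`; for `n < 0`
this is the `|n|`-fold concatenation of the reversed walk `R⁻¹`. -/
def zpowWalk (R : List V) (h : V) (n : ℤ) : List V :=
  if 0 ≤ n then witer R h n.toNat else witer R.reverse h (-n).toNat

/-- A walk is symmetric if every edge it traverses is a symmetric arc. -/
def IsSymWalk (H : Dgraph X) (l : List X) : Prop :=
  l.Chain' fun a b => H.Adj a b ∧ H.Adj b a

/-- The conjugated walk `α(W)⁻¹ · Q · β(W)`. -/
def conj (α β : V → X) (Wl : List V) (Q : List X) : List X :=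
  wcomp (wcomp (Wl.map α).reverse Q) (Wl.map β)

/-- Topological validity of a walk `Q` from `α q` to `β q`:
`β(C) = Q⁻¹ · α(C) · Q` in `π(H)` for every closed walk `C` at `q`. -/
def TopValid (G : Dgraph V) (H : Dgraph X) (α β : V → X) (q : V) (Q : List X) : Prop :=
  ∀ C : List V, IsWalk G q q C →
    PiEq (C.map β) (wcomp (wcomp Q.reverse (C.map α)) Q)

/-- IN-zigzag pattern `a₁ ← a₂ → a₃ ← … ← a_{n-1} → a_n`. -/
def INCompatible (H : Dgraph X) (l : List X) : Prop :=
  ∀ (i : ℕ) (h : i + 1 < l.length),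
    if i % 2 = 0 then H.Adj (l.get ⟨i + 1, h⟩) (l.get ⟨i, by omega⟩)
    else H.Adj (l.get ⟨i, by omega⟩) (l.get ⟨i + 1, h⟩)

/-- OUT-zigzag pattern `a₁ → a₂ ← a₃ → … → a_{n-1} ← a_n`. -/
def OUTCompatible (H : Dgraph X) (l : List X) : Prop :=
  ∀ (i : ℕ) (h : i + 1 < l.length),
    if i % 2 = 0 then H.Adj (l.get ⟨i, by omega⟩) (l.get ⟨i + 1, h⟩)
    else H.Adj (l.get ⟨i + 1, h⟩) (l.get ⟨i, by omega⟩)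

/-- A vertex is of type IN if it has an in-neighbor. -/
def TypeIN (G : Dgraph V) (v : V) : Prop := ∃ u, G.Adj u v

/-- A vertex is of type OUT if it has an out-neighbor. -/
def TypeOUT (G : Dgraph V) (v : V) : Prop := ∃ u, G.Adj v u

/-- A vertex is of type SYM if it is of type IN and of type OUT. -/
def TypeSYM (G : Dgraph V) (v : V) : Prop := TypeIN G v ∧ TypeOUT G v

/-- The zigzag condition for the vertex `v`. -/
def Zigzag (G : Dgraph V) (H : Dgraph X) (v : V) (l : List X) : Prop :=
  (TypeIN G v → INCompatible H l) ∧ (TypeOUT G v → OUTCompatible H l)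

/-- A recoloring sequence: a nonempty sequence of homomorphisms in which
consecutive homomorphisms differ on exactly one vertex. -/
def IsRecolSeq (G : Dgraph V) (H : Dgraph X) (σs : List (V → X)) : Prop :=
  σs ≠ [] ∧ (∀ σ ∈ σs, IsHom G H σ) ∧ σs.Chain' fun σ σ' => ∃! u, σ u ≠ σ' u

/-- The monochromatic neighborhood property: whenever a vertex changes its
color, all of its neighbors (in the underlying undirected graph) have one
common color. -/
def MonoNbhd (G : Dgraph V) (σs : List (V → X)) : Prop :=
  σs.Chain' fun σ σ' => ∀ v, σ v ≠ σ' v → ∃ h, ∀ w, G.UAdj v w → σ w = h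

/-- `VWalk G v σs S`: `S` is the vertex walk `S(v)` of the recoloring sequence
`σs`; each color change of `v` from `a` to `b`, while all neighbors of `v` are
colored `h`, contributes the two edges `(a h)(h b)`. -/
inductive VWalk (G : Dgraph V) (v : V) : List (V → X) → List X → Prop
  | single (σ : V → X) : VWalk G v [σ] [σ v]
  | stay {σ σ' : V → X} {rest : List (V → X)} {l : List X} :
      σ v = σ' v → VWalk G v (σ' :: rest) l → VWalk G v (σ :: σ' :: rest) l
  | move {σ σ' : V → X} {rest : List (V → X)} {l : List X} (h : X) :
      σ v ≠ σ' v → (∀ w, G.UAdj v w → σ w = h) →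
      VWalk G v (σ' :: rest) l → VWalk G v (σ :: σ' :: rest) (σ v :: h :: l)

/-- `H`-realizability of a walk `Q` via recoloring sequences satisfying the
monochromatic neighborhood property: `Q = S(q)` in `π(H)`. -/
def MRealizable (G : Dgraph V) (H : Dgraph X) (α β : V → X) (q : V) (Q : List X) : Prop :=
  ∃ (σs : List (V → X)) (Sq : List X),
    IsRecolSeq G H σs ∧ σs.head? = some α ∧ σs.getLast? = some β ∧
    MonoNbhd G σs ∧ VWalk G q σs Sq ∧ PiEq Sq Q

/-- Orientation compatibility of a walk `Q`: every generated vertex walk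
satisfies the zigzag condition. -/
def OrientCompatible (G : Dgraph V) (H : Dgraph X) (α β : V → X) (q : V) (Q : List X) : Prop :=
  ∀ (v : V) (Wl : List V), IsWalk G q v Wl →
    ∀ S : List X, IsReduced S → PiEq (conj α β Wl Q) S → Zigzag G H v S

/-- Hom₁-adjacency: the homomorphisms differ on exactly one vertex and, for
every arc `x → y` of `G`, both `φ x → ψ y` and `ψ x → φ y` are arcs of `H`. -/
def Hom1Adj (G : Dgraph V) (H : Dgraph X) (φ ψ : V → X) : Prop :=
  (∃! u, φ u ≠ ψ u) ∧ ∀ ⦃x y⦄, G.Adj x y → H.Adj (φ x) (ψ y) ∧ H.Adj (ψ x) (φ y)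

/-- A recoloring sequence in the Hom₁ sense (digraphs). -/
def Hom1Seq (G : Dgraph V) (H : Dgraph X) (σs : List (V → X)) : Prop :=
  σs ≠ [] ∧ (∀ σ ∈ σs, IsHom G H σ) ∧ σs.Chain' (Hom1Adj G H)

/-- A recoloring sequence in which each step recolors exactly one vertex to an
adjacent color (the Hom₁ sense for reflexive undirected graphs). -/
def AdjRecolSeq (G : Dgraph V) (H : Dgraph X) (σs : List (V → X)) : Prop :=
  σs ≠ [] ∧ (∀ σ ∈ σs, IsHom G H σ) ∧
  σs.Chain' fun σ σ' => (∃! u, σ u ≠ σ' u) ∧ ∀ u, σ u ≠ σ' u → H.Adj (σ u) (σ' u)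

/-- The push-or-pull property: whenever a vertex changes its color from `a` to
`b`, every neighbor of that vertex has color `a` or `b`. -/
def PushOrPull (G : Dgraph V) (σs : List (V → X)) : Prop :=
  σs.Chain' fun σ σ' => ∀ u, σ u ≠ σ' u → ∀ w, G.UAdj u w → σ w = σ u ∨ σ w = σ' u

/-- The walk of successive colors of `v` along a recoloring sequence. -/
def colorWalk (σs : List (V → X)) (v : V) : List X := σs.map fun σ => σ v

/-- `H`-realizability via recoloring sequences (reflexive undirected Hom₁
sense) satisfying the push-or-pull property. -/
def PRealizable (G : Dgraph V) (H : Dgraph X) (α β : V → X) (q : V) (Q : List X) : Prop :=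
  ∃ σs : List (V → X), AdjRecolSeq G H σs ∧ σs.head? = some α ∧ σs.getLast? = some β ∧
    PushOrPull G σs ∧ PiEq (colorWalk σs q) Q

/-- `H`-realizability via Hom₁ recoloring sequences of digraphs satisfying the
push-or-pull property. -/
def DRealizable (G : Dgraph V) (H : Dgraph X) (α β : V → X) (q : V) (Q : List X) : Prop :=
  ∃ σs : List (V → X), Hom1Seq G H σs ∧ σs.head? = some α ∧ σs.getLast? = some β ∧
    PushOrPull G σs ∧ PiEq (colorWalk σs q) Q

/-- `H` contains no 4-cycle of algebraic girth 0 as a subgraph (neither of the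
two orientations of the 4-cycle with two forward and two backward arcs). -/
def NoZeroGirthC4 (H : Dgraph X) : Prop :=
  ∀ a b c d : X, a ≠ b → a ≠ c → a ≠ d → b ≠ c → b ≠ d → c ≠ d →
    ¬(H.Adj a b ∧ H.Adj b d ∧ H.Adj a c ∧ H.Adj c d) ∧
    ¬(H.Adj a b ∧ H.Adj d b ∧ H.Adj a c ∧ H.Adj d c)

/-- `H` contains no triangle of algebraic girth 1 as a subgraph. -/
def NoOneGirthTriangle (H : Dgraph X) : Prop :=
  ∀ x y z : X, x ≠ y → y ≠ z → x ≠ z → ¬(H.Adj x y ∧ H.Adj y z ∧ H.Adj x z)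

/-- A path in the reconfiguration graph `R_H(G)` from `α` to `β`. -/
def IsRPath (G : Dgraph V) (H : Dgraph X) (α β : V → X) (L : List (V → X)) : Prop :=
  L ≠ [] ∧ L.head? = some α ∧ L.getLast? = some β ∧
  (∀ σ ∈ L, IsHom G H σ) ∧ L.Chain' fun φ ψ => ∃! u, φ u ≠ ψ u

/-- A path in the graph `Hom₁(G, H)` from `α` to `β`. -/
def IsHom1Path (G : Dgraph V) (H : Dgraph X) (α β : V → X) (L : List (V → X)) : Prop :=
  L ≠ [] ∧ L.head? = some α ∧ L.getLast? = some β ∧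
  (∀ σ ∈ L, IsHom G H σ) ∧ L.Chain' (Hom1Adj G H)

/-- The set of reduced walks `Q` from `α q` to `β q` that generate symmetric
vertex walks on `V'` with the system of walks `Wf`. -/
def SymGenSet (H : Dgraph X) (α β : V → X) (q : V)
    (V' : Set V) (Wf : V → List V) : Set (List X) :=
  {Q | IsWalk H (α q) (β q) Q ∧ IsReduced Q ∧
    ∀ v ∈ V', ∀ S : List X, IsReduced S → PiEq (conj α β (Wf v) Q) S → IsSymWalk H S}

/-- The set of orientation-compatible walks for `q` and the system `Uf`. -/
def OCSet (G : Dgraph V) (H : Dgraph X) (α β : V → X) (q : V)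
    (Uf : V → List V) : Set (List X) :=
  {Q | IsWalk H (α q) (β q) Q ∧ IsReduced Q ∧ Even (wlen Q) ∧
    ∀ (v : V) (S : List X), IsReduced S → PiEq (conj α β (Uf v) Q) S → Zigzag G H v S}

/-- The set `Π_q` of walks from `α q` to `β q` that are `H`-realizable via
recoloring sequences satisfying the monochromatic neighborhood property. -/
def MRealSet (G : Dgraph V) (H : Dgraph X) (α β : V → X) (q : V) : Set (List X) :=
  {Q | IsWalk H (α q) (β q) Q ∧ IsReduced Q ∧ MRealizable G H α β q Q}

/-- The set of walks from `α q` to `β q` that are `H`-realizable via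
recoloring sequences satisfying the push-or-pull property. -/
def PRealSet (G : Dgraph V) (H : Dgraph X) (α β : V → X) (q : V) : Set (List X) :=
  {Q | IsWalk H (α q) (β q) Q ∧ IsReduced Q ∧ PRealizable G H α β q Q}

/-- Ceiling division on natural numbers. -/
def cdiv (a b : ℕ) : ℕ := (a + b - 1) / b

end HRecoloring

open HRecoloring

/-!
Suppose that reduced IN-zigzag walks `Q₁ = R^{n₁}P` and `Q₂ = R^{n₂}P` (equalities in `π(H)`)
exist with `n₁ < n₂`. Both have even length, so `W = Q₂Q₁⁻¹` is again IN-zigzag, and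
`W = R^m` in `π(H)` with `m = n₂ - n₁ > 0`. Reduction is confluent, so `W` reduces to the reduced
form of `R^m`; as `W` has no loop steps, every step deletes a backtrack `x y x`, which keeps the
zigzag pattern. Writing `R = A T A⁻¹` with `T` cyclically reduced, the reduced form of `R^m` is
`A T^m A⁻¹`, which contains every edge of `R` at a position of the same parity because `T` has
even length. So `R` is IN-zigzag. The OUT-zigzag pattern of `H` is the IN-zigzag pattern of the
reversed digraph.
-/

namespace HRecoloring

open Relation

variable {V : Type}

/-! ### Concatenation and reduction of walks -/

section wcomp

variable {u v w : List V} {a : V}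

theorem wcomp_cons (b : V) (u v : List V) : wcomp (b :: u) v = b :: wcomp u v := rfl

theorem wcomp_singleton (u : List V) : wcomp u [a] = u := by
  simp [wcomp]

theorem singleton_wcomp (hv : v.head? = some a) : wcomp [a] v = v := by
  cases v <;> simp_all [wcomp]

theorem wcomp_assoc (hv : v ≠ []) : wcomp (wcomp u v) w = wcomp u (wcomp v w) := by
  cases v <;> simp_all [wcomp]

theorem wcomp_eq_dropLast_append (hu : u.getLast? = some a) (hv : v.head? = some a) :
    wcomp u v = u.dropLast ++ v := by
  obtain ⟨v, rfl⟩ := List.head?_eq_some_iff.mp hv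
  rw [wcomp, List.tail_cons, ← List.dropLast_append_getLast? a hu, List.append_assoc]
  simp

theorem head?_wcomp (hu : u ≠ []) (v : List V) : (wcomp u v).head? = u.head? := by
  cases u <;> simp_all [wcomp]

theorem getLast?_wcomp (hu : u.getLast? = some a) (hv : v.head? = some a) :
    (wcomp u v).getLast? = v.getLast? := by
  rw [wcomp_eq_dropLast_append hu hv,
    List.getLast?_append_of_ne_nil _ (by rintro rfl; simp at hv)]

theorem wlen_wcomp (hu : u ≠ []) (hv : v ≠ []) : wlen (wcomp u v) = wlen u + wlen v := by
  cases v
  · contradiction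
  · have := List.length_pos_iff.mpr hu
    simp only [wlen, wcomp, List.length_append, List.tail_cons, List.length_cons]
    omega

end wcomp

section RStep

variable {l l' : List V} {a : V}

theorem RStep.append_left (p : List V) (h : RStep l l') : RStep (p ++ l) (p ++ l') := by
  rcases h with ⟨q, s, x, y, rfl, rfl⟩ | ⟨q, s, x, rfl, rfl⟩
  · exact Or.inl ⟨p ++ q, s, x, y, by simp, by simp⟩
  · exact Or.inr ⟨p ++ q, s, x, by simp, by simp⟩

theorem RStep.append_right (t : List V) (h : RStep l l') : RStep (l ++ t) (l' ++ t) := by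
  rcases h with ⟨q, s, x, y, rfl, rfl⟩ | ⟨q, s, x, rfl, rfl⟩
  · exact Or.inl ⟨q, s ++ t, x, y, by simp, by simp⟩
  · exact Or.inr ⟨q, s ++ t, x, by simp, by simp⟩

theorem RStep.reverse (h : RStep l l') : RStep l.reverse l'.reverse := by
  rcases h with ⟨p, s, x, y, rfl, rfl⟩ | ⟨p, s, x, rfl, rfl⟩
  · exact Or.inl ⟨s.reverse, p.reverse, x, y, by simp, by simp⟩
  · exact Or.inr ⟨s.reverse, p.reverse, x, by simp, by simp⟩

theorem RStep.head?_eq (h : RStep l l') : l'.head? = l.head? := by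
  rcases h with ⟨p, s, x, y, rfl, rfl⟩ | ⟨p, s, x, rfl, rfl⟩ <;> cases p <;> simp

theorem RStep.getLast?_eq (h : RStep l l') : l'.getLast? = l.getLast? := by
  simpa using h.reverse.head?_eq

theorem not_rStep_nil : ¬ RStep [] l := by
  rintro (⟨p, s, x, y, h, -⟩ | ⟨p, s, x, h, -⟩) <;> simp at h

theorem rStep_cons_iff : RStep (a :: l) l' ↔
    (∃ y s, l = y :: a :: s ∧ l' = a :: s) ∨ (l.head? = some a ∧ l' = l) ∨
      ∃ l'', RStep l l'' ∧ l' = a :: l'' := by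
  constructor
  · rintro (⟨_ | ⟨b, p⟩, s, x, y, hl, rfl⟩ | ⟨_ | ⟨b, p⟩, s, x, hl, rfl⟩) <;>
      simp only [List.nil_append, List.cons_append, List.cons.injEq] at hl <;>
      obtain ⟨rfl, rfl⟩ := hl
    · exact Or.inl ⟨y, s, rfl, rfl⟩
    · exact Or.inr (Or.inr ⟨_, Or.inl ⟨p, s, x, y, rfl, rfl⟩, rfl⟩)
    · exact Or.inr (Or.inl ⟨rfl, rfl⟩)
    · exact Or.inr (Or.inr ⟨_, Or.inr ⟨p, s, x, rfl, rfl⟩, rfl⟩)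
  · rintro (⟨y, s, rfl, rfl⟩ | ⟨hl, hl'⟩ | ⟨l'', h, rfl⟩)
    · exact Or.inl ⟨[], s, a, y, rfl, rfl⟩
    · rw [hl']
      obtain ⟨s, rfl⟩ : ∃ s, l = a :: s := by cases l <;> simp_all
      exact Or.inr ⟨[], s, a, rfl, rfl⟩
    · exact h.append_left [a]

theorem RStep.exists_eq_cons (h : RStep (a :: l) l') : ∃ t, l' = a :: t := by
  have := h.head?_eq
  cases l' <;> simp_all

theorem isReduced_nil : IsReduced ([] : List V) := fun _ => not_rStep_nil

theorem isReduced_cons_iff :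
    IsReduced (a :: l) ↔ IsReduced l ∧ l[0]? ≠ some a ∧ l[1]? ≠ some a := by
  simp only [IsReduced, rStep_cons_iff, not_or, not_exists, not_and]
  constructor
  · intro h
    refine ⟨fun l'' hl'' => (h _).2.2 l'' hl'' rfl, fun h0 => ?_, fun h1 => ?_⟩
    · exact (h l).2.1 (by rwa [List.head?_eq_getElem?]) rfl
    · obtain ⟨y, s, rfl⟩ : ∃ y s, l = y :: a :: s := by
        match l, h1 with
        | y :: a :: s, rfl => exact ⟨y, s, rfl⟩
      exact (h (a :: s)).1 y s rfl rfl
  · rintro ⟨hl, h0, h1⟩ l'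
    refine ⟨?_, fun h _ => h0 (by rwa [← List.head?_eq_getElem?]),
      fun l'' hl'' _ => hl l'' hl''⟩
    rintro y s rfl -
    simp at h1

theorem isReduced_singleton (a : V) : IsReduced [a] :=
  isReduced_cons_iff.mpr ⟨isReduced_nil, by simp, by simp⟩

end RStep

theorem isReduced_append_cons_iff {u v : List V} {a : V} :
    IsReduced (u ++ a :: v) ↔
      IsReduced (u ++ [a]) ∧ IsReduced (a :: v) ∧ ∀ c ∈ u.getLast?, v[0]? ≠ some c := by
  induction u with
  | nil => simp [isReduced_singleton]
  | cons b u ih =>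
    rw [List.cons_append, List.cons_append, isReduced_cons_iff, isReduced_cons_iff, ih]
    rcases u with _ | ⟨d, _ | ⟨e, u⟩⟩ <;>
      simp only [List.nil_append, List.cons_append, List.getElem?_cons_zero,
        List.getElem?_cons_succ, List.getLast?_cons_cons, List.getLast?_singleton,
        List.getLast?_nil, Option.mem_def, Option.some.injEq, reduceCtorEq, ne_eq,
        forall_eq', isReduced_singleton] <;>
      tauto

theorem isReduced_wcomp_iff {u v : List V} {a : V} (hu : u.getLast? = some a)
    (hv : v.head? = some a) :
    IsReduced (wcomp u v) ↔
      IsReduced u ∧ IsReduced v ∧ ∀ c ∈ u.reverse[1]?, v[1]? ≠ some c := by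
  obtain ⟨u, rfl⟩ := List.getLast?_eq_some_iff.mp hu
  obtain ⟨v, rfl⟩ := List.head?_eq_some_iff.mp hv
  rw [wcomp_eq_dropLast_append hu hv, List.dropLast_concat, isReduced_append_cons_iff]
  simp [← List.head?_eq_getElem?]

/-! ### Confluence -/

section Confluence

variable {l l₁ l₂ : List V} {a : V}

theorem RStep.diamond_of_eq_cons_cons {y : V} {s : List V} (hl : l = y :: a :: s)
    (h : RStep (a :: l) l₂) : ∃ d, ReflGen RStep (a :: s) d ∧ ReflGen RStep l₂ d := by
  subst hl
  rcases rStep_cons_iff.mp h with ⟨y', s', hs, rfl⟩ | ⟨hy, rfl⟩ | ⟨l'', h', rfl⟩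
  · obtain ⟨rfl, rfl⟩ : y = y' ∧ s = s' := by simpa using hs
    exact ⟨_, .refl, .refl⟩
  · obtain rfl : y = a := by simpa using hy
    exact ⟨_, .refl, .single (Or.inr ⟨[], s, y, rfl, rfl⟩)⟩
  · rcases rStep_cons_iff.mp h' with ⟨y', s', hs, rfl⟩ | ⟨hy, rfl⟩ | ⟨l''', h'', rfl⟩
    · obtain ⟨rfl, rfl⟩ : a = y' ∧ s = y :: s' := by simpa using hs
      exact ⟨_, .refl, .refl⟩
    · obtain rfl : a = y := by simpa using hy
      exact ⟨_, .refl, .single (Or.inr ⟨[], s, a, rfl, rfl⟩)⟩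
    · obtain ⟨t, rfl⟩ := h''.exists_eq_cons
      exact ⟨_, .single h'', .single (Or.inl ⟨[], t, a, y, rfl, rfl⟩)⟩

theorem RStep.diamond_of_head?_eq (hl : l.head? = some a) (h : RStep (a :: l) l₂) :
    ∃ d, ReflGen RStep l d ∧ ReflGen RStep l₂ d := by
  obtain ⟨s, rfl⟩ : ∃ s, l = a :: s := by cases l <;> simp_all
  rcases rStep_cons_iff.mp h with ⟨y, s', hs, rfl⟩ | ⟨-, rfl⟩ | ⟨l'', h', rfl⟩
  · obtain ⟨rfl, rfl⟩ : a = y ∧ s = a :: s' := by simpa using hs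
    exact ⟨_, .single (Or.inr ⟨[], s', a, rfl, rfl⟩), .refl⟩
  · exact ⟨_, .refl, .refl⟩
  · obtain ⟨t, rfl⟩ := h'.exists_eq_cons
    exact ⟨_, .single h', .single (Or.inr ⟨[], t, a, rfl, rfl⟩)⟩

theorem RStep.diamond (h₁ : RStep l l₁) (h₂ : RStep l l₂) :
    ∃ d, ReflGen RStep l₁ d ∧ ReflGen RStep l₂ d := by
  induction l generalizing l₁ l₂ with
  | nil => exact absurd h₁ not_rStep_nil
  | cons a l ih =>
    have flip {l₁ l₂ : List V} : (∃ d, ReflGen RStep l₂ d ∧ ReflGen RStep l₁ d) →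
        ∃ d, ReflGen RStep l₁ d ∧ ReflGen RStep l₂ d := fun ⟨d, h, h'⟩ => ⟨d, h', h⟩
    rcases rStep_cons_iff.mp h₁ with ⟨y, s, hl, rfl⟩ | ⟨hl, rfl⟩ | ⟨l₁', h₁', rfl⟩
    · exact h₂.diamond_of_eq_cons_cons hl
    · exact h₂.diamond_of_head?_eq hl
    rcases rStep_cons_iff.mp h₂ with ⟨y, s, hl, rfl⟩ | ⟨hl, rfl⟩ | ⟨l₂', h₂', rfl⟩
    · exact flip (h₁.diamond_of_eq_cons_cons hl)
    · exact flip (h₁.diamond_of_head?_eq hl)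
    have cons {x y : List V} : ReflGen RStep x y → ReflGen RStep (a :: x) (a :: y)
      | .refl => .refl
      | .single h => .single (h.append_left [a])
    obtain ⟨d, hd₁, hd₂⟩ := ih h₁' h₂'
    exact ⟨a :: d, cons hd₁, cons hd₂⟩

end Confluence

theorem PiEq.exists_reflTransGen {l l' : List V} (h : PiEq l l') :
    ∃ d, ReflTransGen RStep l d ∧ ReflTransGen RStep l' d := by
  have hjoin := equivalence_join_reflTransGen (r := @RStep V) fun _ _ _ h₁ h₂ =>
    (RStep.diamond h₁ h₂).imp fun _ hd => ⟨hd.1, hd.2.to_reflTransGen⟩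
  exact hjoin.eqvGen_iff.mp (h.mono fun _ b hab => ⟨b, .single hab, .refl⟩)

theorem IsReduced.eq_of_reflTransGen {l d : List V} (hl : IsReduced l)
    (h : ReflTransGen RStep l d) : d = l := by
  rcases ReflTransGen.cases_head h with rfl | ⟨c, hc, -⟩
  · rfl
  · exact absurd hc (hl c)

theorem IsReduced.eq_of_piEq {l l' : List V} (hl : IsReduced l) (hl' : IsReduced l')
    (h : PiEq l l') : l = l' := by
  obtain ⟨d, hd, hd'⟩ := h.exists_reflTransGen
  rw [← hl.eq_of_reflTransGen hd, hl'.eq_of_reflTransGen hd']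

theorem IsReduced.reflTransGen_of_piEq {l q : List V} (hq : IsReduced q) (h : PiEq l q) :
    ReflTransGen RStep l q := by
  obtain ⟨d, hd, hd'⟩ := h.exists_reflTransGen
  rwa [hq.eq_of_reflTransGen hd'] at hd

/-! ### Equality in `π(H)` -/

section PiEq

variable {l l' u u' v v' w : List V} {a : V}

theorem PiEq.refl (l : List V) : PiEq l l := EqvGen.refl l

theorem PiEq.symm (h : PiEq l l') : PiEq l' l := EqvGen.symm _ _ h

theorem PiEq.trans (h : PiEq u v) (h' : PiEq v w) : PiEq u w := EqvGen.trans _ _ _ h h'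

theorem RStep.piEq (h : RStep l l') : PiEq l l' := EqvGen.rel _ _ h

theorem PiEq.apply_eq {β : Type*} (g : List V → β) (hg : ∀ l l', RStep l l' → g l = g l')
    (h : PiEq l l') : g l = g l' :=
  congrArg (Quot.lift g hg) (Quot.eqvGen_sound h)

theorem PiEq.map (f : List V → List V) (hf : ∀ l l', RStep l l' → RStep (f l) (f l'))
    (h : PiEq l l') : PiEq (f l) (f l') :=
  Quot.eqvGen_exact (congrArg (Quot.map f hf) (Quot.eqvGen_sound h))

theorem PiEq.head?_eq (h : PiEq l l') : l.head? = l'.head? :=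
  h.apply_eq _ fun _ _ hs => hs.head?_eq.symm

theorem PiEq.getLast?_eq (h : PiEq l l') : l.getLast? = l'.getLast? :=
  h.apply_eq _ fun _ _ hs => hs.getLast?_eq.symm

theorem PiEq.wcomp_congr (hu : u.getLast? = some a) (hv : v.head? = some a) (hu' : PiEq u u')
    (hv' : PiEq v v') : PiEq (wcomp u v) (wcomp u' v') := by
  have h₁ : PiEq (wcomp u v) (wcomp u' v) :=
    hu'.map (· ++ v.tail) fun _ _ hs => hs.append_right _
  have h₂ : PiEq (u'.dropLast ++ v) (u'.dropLast ++ v') :=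
    hv'.map (u'.dropLast ++ ·) fun _ _ hs => hs.append_left _
  rw [← wcomp_eq_dropLast_append (hu'.getLast?_eq ▸ hu) hv,
    ← wcomp_eq_dropLast_append (hu'.getLast?_eq ▸ hu) (hv'.head?_eq ▸ hv)] at h₂
  exact h₁.trans h₂

theorem piEq_append_cons_reverse (l : List V) (x : V) :
    PiEq (l ++ x :: l.reverse) [l.headD x] := by
  induction l generalizing x with
  | nil => exact .refl _
  | cons b l ih =>
    have h := (ih x).map ([b] ++ · ++ [b]) fun _ _ hs => (hs.append_left _).append_right _
    have hcancel : RStep [b, l.headD x, b] [b] := Or.inl ⟨[], [], b, l.headD x, rfl, rfl⟩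
    rw [show b :: l ++ x :: (b :: l).reverse = [b] ++ (l ++ x :: l.reverse) ++ [b] by simp]
    exact h.trans hcancel.piEq

end PiEq

section Cancellation

variable {l u v w : List V} {a : V}

theorem piEq_wcomp_reverse (hl : l.head? = some a) : PiEq (wcomp l l.reverse) [a] := by
  rcases l.eq_nil_or_concat with rfl | ⟨t, x, rfl⟩
  · simp at hl
  · have hx : t.headD x = a := by cases t <;> simp_all
    have h := piEq_append_cons_reverse t x
    rw [hx] at h
    simpa [wcomp] using h

theorem piEq_wcomp_wcomp_reverse (hu : u.getLast? = some a) (hv : v.head? = some a) :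
    PiEq (wcomp (wcomp u v) v.reverse) u := by
  have hv₀ : v ≠ [] := by rintro rfl; simp at hv
  have h := (PiEq.refl u).wcomp_congr hu (by rw [head?_wcomp hv₀, hv]) (piEq_wcomp_reverse hv)
  rwa [wcomp_singleton, ← wcomp_assoc hv₀] at h

theorem piEq_wcomp_reverse_wcomp (hv : v.getLast? = some a) (hw : w.head? = some a) :
    PiEq (wcomp v.reverse (wcomp v w)) w := by
  obtain ⟨b, hb⟩ : ∃ b, v.head? = some b := by cases v <;> simp_all
  have hv₀ : v ≠ [] := by rintro rfl; simp at hv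
  have h := (piEq_wcomp_reverse (l := v.reverse) (by simpa using hv)).wcomp_congr
    (by rw [List.reverse_reverse, getLast?_wcomp (by simpa using hb) hb, hv]) hw (PiEq.refl w)
  rwa [List.reverse_reverse, singleton_wcomp hw, wcomp_assoc hv₀] at h

end Cancellation

/-! ### Powers of a closed walk -/

section Powers

variable {R : List V} {h : V}

theorem witer_head? (hRh : R.head? = some h) (n : ℕ) : (witer R h n).head? = some h := by
  cases n with
  | zero => rfl
  | succ n => rw [witer, head?_wcomp (by rintro rfl; simp at hRh), hRh]

theorem witer_getLast? (hRh : R.head? = some h) (hRl : R.getLast? = some h) (n : ℕ) :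
    (witer R h n).getLast? = some h := by
  induction n with
  | zero => rfl
  | succ n ih => rw [witer, getLast?_wcomp hRl (witer_head? hRh n), ih]

theorem witer_ne_nil (hRh : R.head? = some h) (n : ℕ) : witer R h n ≠ [] := by
  have := witer_head? hRh n
  rintro h'
  simp [h'] at this

theorem wlen_witer (hRh : R.head? = some h) (n : ℕ) : wlen (witer R h n) = n * wlen R := by
  induction n with
  | zero => simp [witer, wlen]
  | succ n ih =>
    rw [witer, wlen_wcomp (by rintro rfl; simp at hRh) (witer_ne_nil hRh n), ih]
    ring

theorem zpowWalk_natCast (n : ℕ) : zpowWalk R h n = witer R h n := by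
  simp [zpowWalk]

theorem zpowWalk_neg_natCast (n : ℕ) : zpowWalk R h (-n) = witer R.reverse h n := by
  cases n with
  | zero => rfl
  | succ n => rw [zpowWalk, if_neg (by omega)]; simp

theorem zpowWalk_head? (hRh : R.head? = some h) (hRl : R.getLast? = some h) (n : ℤ) :
    (zpowWalk R h n).head? = some h := by
  obtain ⟨n, rfl | rfl⟩ := n.eq_nat_or_neg
  · rw [zpowWalk_natCast, witer_head? hRh]
  · rw [zpowWalk_neg_natCast, witer_head? (by simpa using hRl)]

theorem zpowWalk_ne_nil (hRh : R.head? = some h) (hRl : R.getLast? = some h) (n : ℤ) :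
    zpowWalk R h n ≠ [] := by
  have := zpowWalk_head? hRh hRl n
  rintro h'
  simp [h'] at this

theorem zpowWalk_getLast? (hRh : R.head? = some h) (hRl : R.getLast? = some h) (n : ℤ) :
    (zpowWalk R h n).getLast? = some h := by
  obtain ⟨n, rfl | rfl⟩ := n.eq_nat_or_neg
  · rw [zpowWalk_natCast, witer_getLast? hRh hRl]
  · rw [zpowWalk_neg_natCast, witer_getLast? (by simpa using hRl) (by simpa using hRh)]

theorem even_wlen_zpowWalk (hRh : R.head? = some h) (hRl : R.getLast? = some h)
    (hR : Even (wlen R)) (n : ℤ) : Even (wlen (zpowWalk R h n)) := by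
  obtain ⟨n, rfl | rfl⟩ := n.eq_nat_or_neg
  · rw [zpowWalk_natCast, wlen_witer hRh]
    exact hR.mul_left n
  · rw [zpowWalk_neg_natCast, wlen_witer (by simpa using hRl)]
    exact (by simpa [wlen] using hR : Even (wlen R.reverse)).mul_left n

theorem piEq_zpowWalk_add_one (hRh : R.head? = some h) (hRl : R.getLast? = some h) (n : ℤ) :
    PiEq (zpowWalk R h (n + 1)) (wcomp R (zpowWalk R h n)) := by
  rcases n with n | n
  · rw [Int.ofNat_eq_natCast, ← Nat.cast_succ, zpowWalk_natCast, zpowWalk_natCast]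
    exact .refl _
  · rw [show Int.negSucc n + 1 = -(n : ℤ) by omega,
      show Int.negSucc n = -((n + 1 : ℕ) : ℤ) by omega, zpowWalk_neg_natCast,
      zpowWalk_neg_natCast, witer]
    have h := piEq_wcomp_reverse_wcomp (v := R.reverse) (by simpa using hRh)
      (witer_head? (R := R.reverse) (by simpa using hRl) n)
    rw [List.reverse_reverse] at h
    exact h.symm

theorem piEq_zpowWalk_add (hRh : R.head? = some h) (hRl : R.getLast? = some h) (n : ℤ)
    (m : ℕ) : PiEq (zpowWalk R h (n + m)) (wcomp (witer R h m) (zpowWalk R h n)) := by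
  induction m with
  | zero =>
    rw [Nat.cast_zero, add_zero, witer, singleton_wcomp (zpowWalk_head? hRh hRl n)]
    exact .refl _
  | succ m ih =>
    rw [Nat.cast_succ, ← add_assoc, witer, wcomp_assoc (witer_ne_nil hRh m)]
    exact (piEq_zpowWalk_add_one hRh hRl _).trans
      ((PiEq.refl R).wcomp_congr hRl (zpowWalk_head? hRh hRl _) ih)

end Powers

/-! ### Zigzag patterns along reductions -/

/- Loop steps `(x x)` are the only reductions that shift later positions by an odd amount;
without them every reduction deletes a backtrack `x y x`. -/

section Loopless

variable {l l' u v : List V} {a : V}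

theorem IsReduced.of_append_left (h : IsReduced (u ++ v)) : IsReduced u :=
  fun _ hs => h _ (hs.append_right v)

theorem IsReduced.isChain_ne (hl : IsReduced l) : l.IsChain (· ≠ ·) := by
  induction l with
  | nil => exact .nil
  | cons a l ih =>
    obtain ⟨hl, h0, -⟩ := isReduced_cons_iff.mp hl
    refine List.isChain_cons.mpr ⟨fun b hb => ?_, ih hl⟩
    rintro rfl
    exact h0 (by rwa [← List.head?_eq_getElem?])

theorem isChain_ne_wcomp (hu : u.IsChain (· ≠ ·)) (hv : v.IsChain (· ≠ ·))
    (hua : u.getLast? = some a) (hva : v.head? = some a) : (wcomp u v).IsChain (· ≠ ·) := by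
  obtain ⟨u, rfl⟩ := List.getLast?_eq_some_iff.mp hua
  obtain ⟨v, rfl⟩ := List.head?_eq_some_iff.mp hva
  rw [wcomp_eq_dropLast_append hua hva, List.dropLast_concat, List.isChain_split]
  exact ⟨hu, hv⟩

theorem isChain_ne_reverse (hl : l.IsChain (· ≠ ·)) : l.reverse.IsChain (· ≠ ·) :=
  List.isChain_reverse.mpr (hl.imp fun _ _ h => h.symm)

theorem RStep.exists_of_isChain_ne (hl : l.IsChain (· ≠ ·)) (h : RStep l l') :
    ∃ p x y s, l = p ++ x :: y :: x :: s ∧ l' = p ++ x :: s := by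
  rcases h with ⟨p, s, x, y, rfl, rfl⟩ | ⟨p, s, x, rfl, -⟩
  · exact ⟨p, x, y, s, by simp, by simp⟩
  · have := hl.infix ⟨p, s, rfl⟩
    simp at this

theorem RStep.isChain_ne (hl : l.IsChain (· ≠ ·)) (h : RStep l l') :
    l'.IsChain (· ≠ ·) := by
  obtain ⟨p, x, y, s, rfl, rfl⟩ := h.exists_of_isChain_ne hl
  rw [List.isChain_split] at hl ⊢
  exact ⟨hl.1, hl.2.tail.tail⟩

theorem RStep.wlen_eq (hl : l.IsChain (· ≠ ·)) (h : RStep l l') : wlen l = wlen l' + 2 := by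
  obtain ⟨p, x, y, s, rfl, rfl⟩ := h.exists_of_isChain_ne hl
  simp only [wlen, List.length_append, List.length_cons]
  omega

theorem isChain_ne_of_reflTransGen (hl : l.IsChain (· ≠ ·)) (h : ReflTransGen RStep l l') :
    l'.IsChain (· ≠ ·) := by
  induction h with
  | refl => exact hl
  | tail _ hs ih => exact hs.isChain_ne ih

theorem even_wlen_of_reflTransGen (hl : l.IsChain (· ≠ ·)) (h : ReflTransGen RStep l l')
    (he : Even (wlen l)) : Even (wlen l') := by
  induction h with
  | refl => exact he
  | tail h₁ hs ih =>
    rw [hs.wlen_eq (isChain_ne_of_reflTransGen hl h₁)] at ih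
    exact (Nat.even_add.mp ih).mpr even_two

theorem isChain_ne_witer {R : List V} {h : V} (hRh : R.head? = some h)
    (hRl : R.getLast? = some h) (hR : R.IsChain (· ≠ ·)) (n : ℕ) :
    (witer R h n).IsChain (· ≠ ·) := by
  induction n with
  | zero => exact .singleton h
  | succ n ih => exact isChain_ne_wcomp hR ih hRl (witer_head? hRh n)

theorem isChain_ne_zpowWalk {R : List V} {h : V} (hRh : R.head? = some h)
    (hRl : R.getLast? = some h) (hR : R.IsChain (· ≠ ·)) (n : ℤ) :
    (zpowWalk R h n).IsChain (· ≠ ·) := by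
  obtain ⟨n, rfl | rfl⟩ := n.eq_nat_or_neg
  · rw [zpowWalk_natCast]
    exact isChain_ne_witer hRh hRl hR n
  · rw [zpowWalk_neg_natCast]
    exact isChain_ne_witer (by simpa using hRl) (by simpa using hRh) (isChain_ne_reverse hR) n

end Loopless

/- Shifting a zigzag pattern by one position exchanges IN and OUT, i.e. reverses the digraph:
a pattern that starts at position `k` is the IN-zigzag pattern of `Dgraph.reverse^[k] H`. -/
def Dgraph.reverse (H : Dgraph V) : Dgraph V := ⟨fun u v => H.Adj v u⟩

theorem Dgraph.reverse_involutive : Function.Involutive (Dgraph.reverse (V := V)) :=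
  fun _ => rfl

section Zigzag

variable {H : Dgraph V} {l u v : List V} {a b : V}

theorem outCompatible_iff_inCompatible_reverse :
    OUTCompatible H l ↔ INCompatible H.reverse l := Iff.rfl

theorem iterate_reverse_add_of_even {n : ℕ} (hn : Even n) (k : ℕ) :
    Dgraph.reverse^[n + k] H = Dgraph.reverse^[k] H := by
  rw [add_comm, Function.iterate_add_apply, Dgraph.reverse_involutive.iterate_even hn, id]

theorem inCompatible_of_length_le_one (hl : l.length ≤ 1) : INCompatible H l :=
  fun i hi => absurd hi (by omega)

theorem inCompatible_cons_cons :
    INCompatible H (a :: b :: l) ↔ H.Adj b a ∧ INCompatible H.reverse (b :: l) := by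
  simp only [INCompatible, List.get_eq_getElem, List.length_cons]
  constructor
  · intro h
    refine ⟨by simpa using h 0 (by omega), fun i hi => ?_⟩
    have := h (i + 1) (by omega)
    simp only [List.getElem_cons_succ] at this
    split_ifs at this ⊢ <;> first | omega | exact this
  · rintro ⟨h0, h⟩ (_ | i) hi
    · simpa using h0
    · have := h i (by omega)
      simp only [List.getElem_cons_succ]
      split_ifs at this ⊢ <;> first | omega | exact this

theorem inCompatible_append_cons : INCompatible H (u ++ a :: v) ↔
    INCompatible H (u ++ [a]) ∧ INCompatible (Dgraph.reverse^[u.length] H) (a :: v) := by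
  induction u generalizing H with
  | nil => simp [inCompatible_of_length_le_one]
  | cons b u ih =>
    rcases u with _ | ⟨c, u⟩
    · simp [inCompatible_cons_cons, inCompatible_of_length_le_one]
    · rw [List.cons_append, List.cons_append, inCompatible_cons_cons, ← List.cons_append, ih]
      simp only [List.cons_append, inCompatible_cons_cons, List.length_cons,
        Function.iterate_succ_apply, and_assoc]

theorem inCompatible_wcomp_iff (hu : u.getLast? = some a) (hv : v.head? = some a) :
    INCompatible H (wcomp u v) ↔
      INCompatible H u ∧ INCompatible (Dgraph.reverse^[wlen u] H) v := by
  obtain ⟨u, rfl⟩ := List.getLast?_eq_some_iff.mp hu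
  obtain ⟨v, rfl⟩ := List.head?_eq_some_iff.mp hv
  rw [wcomp_eq_dropLast_append hu hv, List.dropLast_concat, inCompatible_append_cons]
  simp [wlen]

theorem INCompatible.reverse (hl : INCompatible H l) :
    INCompatible (Dgraph.reverse^[wlen l] H) l.reverse := by
  induction l generalizing H with
  | nil => exact inCompatible_of_length_le_one (by simp)
  | cons a l ih =>
    rcases l with _ | ⟨b, l⟩
    · exact inCompatible_of_length_le_one (by simp)
    · obtain ⟨hab, hl⟩ := inCompatible_cons_cons.mp hl
      have hrev := ih hl
      rw [List.reverse_cons] at hrev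
      have hw : wlen (a :: b :: l) = l.length + 1 := rfl
      rw [List.reverse_cons, List.reverse_cons, List.append_assoc, List.singleton_append,
        inCompatible_append_cons, inCompatible_cons_cons, List.length_reverse,
        ← Function.iterate_add_apply, hw, ← add_assoc,
        iterate_reverse_add_of_even (Even.add_self _), Function.iterate_succ_apply]
      exact ⟨hrev, hab, inCompatible_of_length_le_one (by simp)⟩

theorem INCompatible.of_rStep {l' : List V} (hl : l.IsChain (· ≠ ·)) (h : RStep l l')
    (hin : INCompatible H l) : INCompatible H l' := by
  obtain ⟨p, x, y, s, rfl, rfl⟩ := h.exists_of_isChain_ne hl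
  rw [inCompatible_append_cons, inCompatible_cons_cons, inCompatible_cons_cons] at hin
  exact inCompatible_append_cons.mpr ⟨hin.1, hin.2.2.2⟩

theorem inCompatible_of_reflTransGen {l' : List V} (hl : l.IsChain (· ≠ ·))
    (h : ReflTransGen RStep l l') (hin : INCompatible H l) : INCompatible H l' := by
  induction h with
  | refl => exact hin
  | tail h₁ hs ih => exact ih.of_rStep (isChain_ne_of_reflTransGen hl h₁) hs

end Zigzag

/-! ### Cyclically reduced cores -/

section Core

variable {u v A T X B : List V} {a c x y : V}

theorem isCycReduced_iff {l : List V} :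
    IsCycReduced l ↔ IsReduced l ∧ 2 ≤ l.length ∧ l[1]? ≠ l.reverse[1]? := by
  refine and_congr_right fun _ => ⟨fun ⟨h2, hne⟩ => ⟨h2, ?_⟩, fun ⟨h2, hne⟩ => ⟨h2, ?_⟩⟩ <;>
    rw [List.getElem?_reverse (by omega), show l.length - 1 - 1 = l.length - 2 by omega] at * <;>
    simp_all [List.getElem?_eq_getElem h2,
      List.getElem?_eq_getElem (show l.length - 2 < l.length by omega)]

theorem wcomp_append_singleton (hv : v ≠ []) (b : V) : wcomp u (v ++ [b]) = wcomp u v ++ [b] := by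
  simp [wcomp, List.tail_append_of_ne_nil hv]

theorem IsReduced.exists_eq_wcomp_wcomp_reverse {R : List V} (hRh : R.head? = some c)
    (hRl : R.getLast? = some c) (hR : IsReduced R) (h2 : 2 ≤ R.length) :
    ∃ A T x, R = wcomp (wcomp A T) A.reverse ∧ A.head? = some c ∧ A.getLast? = some x ∧
      T.head? = some x ∧ T.getLast? = some x ∧ IsCycReduced T := by
  induction hn : R.length using Nat.strong_induction_on generalizing R c with
  | _ n ih =>
  by_cases hcyc : R[1]? = R.reverse[1]?
  swap
  · exact ⟨[c], R, c, by rw [singleton_wcomp hRh, List.reverse_singleton, wcomp_singleton],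
      rfl, rfl, hRh, hRl, isCycReduced_iff.mpr ⟨hR, h2, hcyc⟩⟩
  -- `R = c x … x c`: peel off the first and last edges and recurse on `x … x`.
  obtain ⟨R, rfl⟩ := List.head?_eq_some_iff.mp hRh
  obtain ⟨M, rfl⟩ : ∃ M, R = M ++ [c] := by
    refine List.getLast?_eq_some_iff.mp ?_
    rcases R with _ | ⟨d, R⟩
    · simp at h2
    · rwa [List.getLast?_cons_cons] at hRl
  have hM2 : 2 ≤ M.length := by
    rcases M with _ | ⟨x, _ | ⟨y, M⟩⟩
    · exact absurd hR (by simp [isReduced_cons_iff])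
    · exact absurd hR (by simp [isReduced_cons_iff])
    · simp
  obtain ⟨x, hMh⟩ : ∃ x, M.head? = some x :=
    ⟨M[0], by rw [List.head?_eq_getElem?, List.getElem?_eq_getElem]⟩
  have hMl : M.getLast? = some x := by
    rw [show (c :: (M ++ [c])).reverse = c :: (M.reverse ++ [c]) by simp,
      List.getElem?_cons_succ, List.getElem?_cons_succ, List.getElem?_append_left (by omega),
      List.getElem?_append_left (by simp; omega), ← List.head?_eq_getElem?,
      ← List.head?_eq_getElem?, hMh, List.head?_reverse] at hcyc
    exact hcyc.symm
  have hMred : IsReduced M := (isReduced_cons_iff.mp hR).1.of_append_left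
  obtain ⟨A, T, z, hM, hAh, hAl, hTh, hTl, hT⟩ :=
    ih M.length (by simp [← hn]) hMh hMl hMred hM2 rfl
  have hA : A ≠ [] := by rintro rfl; simp at hAh
  refine ⟨c :: A, T, z, ?_, rfl, ?_, hTh, hTl, hT⟩
  · rw [List.reverse_cons, wcomp_append_singleton (by simpa using hA), wcomp_cons, wcomp_cons,
      ← hM]
    rfl
  · rcases A with _ | ⟨a, A⟩
    · contradiction
    · rwa [List.getLast?_cons_cons]

theorem getElem?_one_wcomp (hu : 2 ≤ u.length) (v : List V) : (wcomp u v)[1]? = u[1]? :=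
  List.getElem?_append_left hu

theorem getElem?_one_reverse_wcomp (hu : u.getLast? = some a) (hv : v.head? = some a)
    (hv2 : 2 ≤ v.length) : (wcomp u v).reverse[1]? = v.reverse[1]? := by
  rw [wcomp_eq_dropLast_append hu hv, List.reverse_append]
  exact List.getElem?_append_left (by rw [List.length_reverse]; omega)

theorem two_le_length_witer (hTh : T.head? = some x) (hT2 : 2 ≤ T.length) (m : ℕ) :
    2 ≤ (witer T x (m + 1)).length := by
  have h := wlen_witer hTh (m + 1)
  have h' : wlen T ≤ (m + 1) * wlen T := Nat.le_mul_of_pos_left _ m.succ_pos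
  unfold wlen at h h'
  omega

theorem witer_getElem?_one (hT2 : 2 ≤ T.length) (m : ℕ) : (witer T x (m + 1))[1]? = T[1]? :=
  getElem?_one_wcomp hT2 _

theorem witer_reverse_getElem?_one (hTh : T.head? = some x) (hTl : T.getLast? = some x)
    (hT2 : 2 ≤ T.length) (m : ℕ) : (witer T x (m + 1)).reverse[1]? = T.reverse[1]? := by
  induction m with
  | zero => rw [witer, witer, wcomp_singleton]
  | succ m ih =>
    rw [witer, getElem?_one_reverse_wcomp hTl (witer_head? hTh _)
      (two_le_length_witer hTh hT2 m), ih]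

theorem isReduced_witer (hTh : T.head? = some x) (hTl : T.getLast? = some x)
    (hT : IsCycReduced T) (m : ℕ) : IsReduced (witer T x (m + 1)) := by
  obtain ⟨hTred, hT2, hne⟩ := isCycReduced_iff.mp hT
  induction m with
  | zero => rwa [witer, witer, wcomp_singleton]
  | succ m ih =>
    rw [witer, isReduced_wcomp_iff hTl (witer_head? hTh _), witer_getElem?_one hT2]
    exact ⟨hTred, ih, fun c hc => by rwa [← Option.mem_def.mp hc]⟩

theorem isReduced_wcomp_wcomp_iff (hA : A.getLast? = some x) (hXh : X.head? = some x)
    (hXl : X.getLast? = some y) (hB : B.head? = some y) (hX2 : 2 ≤ X.length) :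
    IsReduced (wcomp (wcomp A X) B) ↔ IsReduced A ∧ IsReduced X ∧ IsReduced B ∧
      (∀ c ∈ A.reverse[1]?, X[1]? ≠ some c) ∧
      ∀ c ∈ X.reverse[1]?, B[1]? ≠ some c := by
  rw [isReduced_wcomp_iff (by rwa [getLast?_wcomp hA hXh]) hB, isReduced_wcomp_iff hA hXh,
    getElem?_one_reverse_wcomp hA hXh hX2]
  tauto

theorem isReduced_conj_witer (hAl : A.getLast? = some x) (hTh : T.head? = some x)
    (hTl : T.getLast? = some x) (hT : IsCycReduced T)
    (hR : IsReduced (wcomp (wcomp A T) A.reverse)) (m : ℕ) :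
    IsReduced (wcomp (wcomp A (witer T x (m + 1))) A.reverse) := by
  have hT2 := (isCycReduced_iff.mp hT).2.1
  have hA : A.reverse.head? = some x := by rwa [List.head?_reverse]
  rw [isReduced_wcomp_wcomp_iff hAl hTh hTl hA hT2] at hR
  rw [isReduced_wcomp_wcomp_iff hAl (witer_head? hTh _) (witer_getLast? hTh hTl _) hA
    (two_le_length_witer hTh hT2 m), witer_getElem?_one hT2,
    witer_reverse_getElem?_one hTh hTl hT2]
  exact ⟨hR.1, isReduced_witer hTh hTl hT m, hR.2.2⟩

theorem piEq_witer_conj (hAh : A.head? = some c) (hAl : A.getLast? = some x)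
    (hTh : T.head? = some x) (hTl : T.getLast? = some x) (m : ℕ) :
    PiEq (witer (wcomp (wcomp A T) A.reverse) c (m + 1))
      (wcomp (wcomp A (witer T x (m + 1))) A.reverse) := by
  have hA : A ≠ [] := by rintro rfl; simp at hAh
  have hA' : A.reverse ≠ [] := by simpa using hA
  have hT : T ≠ [] := by rintro rfl; simp at hTh
  have hRh : (wcomp (wcomp A T) A.reverse).head? = some c := by
    rw [head?_wcomp (by simp [wcomp, hA]), head?_wcomp hA, hAh]
  have hRl : (wcomp (wcomp A T) A.reverse).getLast? = some c := by
    rw [getLast?_wcomp (by rwa [getLast?_wcomp hAl hTh]) (by rwa [List.head?_reverse]),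
      List.getLast?_reverse, hAh]
  induction m with
  | zero =>
    rw [witer, witer, witer, witer, wcomp_singleton, wcomp_singleton]
    exact .refl _
  | succ m ih =>
    set Tm := witer T x (m + 1)
    have hTm : Tm ≠ [] := witer_ne_nil hTh _
    have hTmA : (wcomp Tm A.reverse).head? = some x := by
      rw [head?_wcomp hTm, witer_head? hTh]
    have hstep := (PiEq.refl (wcomp (wcomp A T) A.reverse)).wcomp_congr hRl
      (witer_head? hRh _) ih
    have hcancel := (PiEq.refl (wcomp A T)).wcomp_congr (by rwa [getLast?_wcomp hAl hTh])
      (by rwa [head?_wcomp hA', List.head?_reverse]) (piEq_wcomp_reverse_wcomp hAl hTmA)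
    have e₁ : wcomp (wcomp (wcomp A T) A.reverse) (wcomp (wcomp A Tm) A.reverse) =
        wcomp (wcomp A T) (wcomp A.reverse (wcomp A (wcomp Tm A.reverse))) := by
      rw [wcomp_assoc hA', wcomp_assoc hTm]
    have e₂ :
        wcomp (wcomp A T) (wcomp Tm A.reverse) = wcomp (wcomp A (wcomp T Tm)) A.reverse := by
      rw [wcomp_assoc hT, ← wcomp_assoc hTm, wcomp_assoc (v := wcomp T Tm) (by simp [wcomp, hT])]
    rw [e₁] at hstep
    rw [e₂] at hcancel
    exact hstep.trans hcancel

theorem INCompatible.of_conj_witer {H : Dgraph V} (hAl : A.getLast? = some x)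
    (hTh : T.head? = some x) (hTl : T.getLast? = some x) (hT : Even (wlen T)) (m : ℕ)
    (hin : INCompatible H (wcomp (wcomp A (witer T x (m + 1))) A.reverse)) :
    INCompatible H (wcomp (wcomp A T) A.reverse) := by
  have hA : A ≠ [] := by rintro rfl; simp at hAl
  have hA' : A.reverse.head? = some x := by rwa [List.head?_reverse]
  rw [inCompatible_wcomp_iff (by rw [getLast?_wcomp hAl (witer_head? hTh _),
    witer_getLast? hTh hTl]) hA', inCompatible_wcomp_iff hAl (witer_head? hTh _),
    wlen_wcomp hA (witer_ne_nil hTh _), wlen_witer hTh, add_comm (wlen A),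
    iterate_reverse_add_of_even (hT.mul_left _)] at hin
  obtain ⟨⟨hinA, hinTm⟩, hinA'⟩ := hin
  have hinT := ((inCompatible_wcomp_iff hTl (witer_head? hTh m)).mp hinTm).1
  rw [inCompatible_wcomp_iff (by rwa [getLast?_wcomp hAl hTh]) hA',
    inCompatible_wcomp_iff hAl hTh, wlen_wcomp hA (by rintro rfl; simp at hTh),
    add_comm (wlen A), iterate_reverse_add_of_even hT]
  exact ⟨⟨hinA, hinT⟩, hinA'⟩

theorem INCompatible.of_piEq_witer {H : Dgraph V} {R W : List V} (hRh : R.head? = some c)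
    (hRl : R.getLast? = some c) (hR : IsReduced R) (hRe : Even (wlen R))
    (hW : W.IsChain (· ≠ ·)) (hin : INCompatible H W) (m : ℕ)
    (h : PiEq W (witer R c (m + 1))) : INCompatible H R := by
  by_cases h2 : 2 ≤ R.length
  swap
  · exact inCompatible_of_length_le_one (by omega)
  obtain ⟨A, T, x, rfl, hAh, hAl, hTh, hTl, hT⟩ := hR.exists_eq_wcomp_wcomp_reverse hRh hRl h2
  have hS := isReduced_conj_witer hAl hTh hTl hT hR m
  have hWS := hS.reflTransGen_of_piEq (h.trans (piEq_witer_conj hAh hAl hTh hTl m))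
  refine (inCompatible_of_reflTransGen hW hWS hin).of_conj_witer hAl hTh hTl ?_ m
  have hA : A ≠ [] := by rintro rfl; simp at hAh
  rw [wlen_wcomp (by simp [wcomp, hA]) (by simpa using hA), wlen_wcomp hA
    (by rintro rfl; simp at hTh), show wlen A.reverse = wlen A by simp [wlen],
    add_right_comm, Nat.even_add] at hRe
  exact hRe.mp (Even.add_self _)

end Core

section Main

variable {R P Q Q₁ Q₂ : List V} {h b : V}

theorem isChain_ne_wcomp_zpowWalk (hRh : R.head? = some h) (hRl : R.getLast? = some h)
    (hR : IsReduced R) (hPh : P.head? = some h) (hP : IsReduced P) (n : ℤ) :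
    (wcomp (zpowWalk R h n) P).IsChain (· ≠ ·) :=
  isChain_ne_wcomp (isChain_ne_zpowWalk hRh hRl hR.isChain_ne n) hP.isChain_ne
    (zpowWalk_getLast? hRh hRl n) hPh

theorem even_wlen_of_piEq_wcomp_zpowWalk (hRh : R.head? = some h) (hRl : R.getLast? = some h)
    (hR : IsReduced R) (hRe : Even (wlen R)) (hPh : P.head? = some h) (hP : IsReduced P)
    (hPe : Even (wlen P)) (hQ : IsReduced Q) {n : ℤ}
    (hn : PiEq (wcomp (zpowWalk R h n) P) Q) : Even (wlen Q) := by
  refine even_wlen_of_reflTransGen (isChain_ne_wcomp_zpowWalk hRh hRl hR hPh hP n)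
    (hQ.reflTransGen_of_piEq hn) ?_
  rw [wlen_wcomp (zpowWalk_ne_nil hRh hRl n) (by rintro rfl; simp at hPh)]
  exact (even_wlen_zpowWalk hRh hRl hRe n).add hPe

theorem INCompatible.of_piEq_wcomp_witer {H : Dgraph V} (hRh : R.head? = some h)
    (hRl : R.getLast? = some h) (hR : IsReduced R) (hRe : Even (wlen R)) (hQ₁h : Q₁.head? = some h)
    (hQ₁l : Q₁.getLast? = some b) (hQ₂l : Q₂.getLast? = some b) (hQ₁ : IsReduced Q₁)
    (hQ₂ : IsReduced Q₂) (hQ₁e : Even (wlen Q₁)) (hQ₂e : Even (wlen Q₂))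
    (hin₁ : INCompatible H Q₁) (hin₂ : INCompatible H Q₂) (m : ℕ)
    (hQ : PiEq Q₂ (wcomp (witer R h (m + 1)) Q₁)) : INCompatible H R := by
  have hQ₁r : Q₁.reverse.head? = some b := by rwa [List.head?_reverse]
  have hW : INCompatible H (wcomp Q₂ Q₁.reverse) := by
    rw [inCompatible_wcomp_iff hQ₂l hQ₁r, Dgraph.reverse_involutive.iterate_even hQ₂e]
    have := hin₁.reverse
    rw [Dgraph.reverse_involutive.iterate_even hQ₁e] at this
    exact ⟨hin₂, this⟩
  refine hW.of_piEq_witer hRh hRl hR hRe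
    (isChain_ne_wcomp hQ₂.isChain_ne (isChain_ne_reverse hQ₁.isChain_ne) hQ₂l hQ₁r) m ?_
  refine (hQ.wcomp_congr hQ₂l hQ₁r (.refl _)).trans ?_
  exact piEq_wcomp_wcomp_reverse (witer_getLast? hRh hRl _) hQ₁h

theorem subsingleton_inCompatible_piEq_wcomp_zpowWalk (H : Dgraph V)
    (hRh : R.head? = some h) (hRl : R.getLast? = some h) (hR : IsReduced R)
    (hRe : Even (wlen R)) (hPh : P.head? = some h) (hPl : P.getLast? = some b)
    (hP : IsReduced P) (hPe : Even (wlen P)) (hnR : ¬ INCompatible H R) :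
    Set.Subsingleton {Q : List V | IsReduced Q ∧ INCompatible H Q ∧
      ∃ n : ℤ, PiEq (wcomp (zpowWalk R h n) P) Q} := by
  have hends (n : ℤ) : (wcomp (zpowWalk R h n) P).head? = some h ∧
      (wcomp (zpowWalk R h n) P).getLast? = some b := by
    rw [head?_wcomp (zpowWalk_ne_nil hRh hRl n), zpowWalk_head? hRh hRl,
      getLast?_wcomp (zpowWalk_getLast? hRh hRl n) hPh, hPl]
    exact ⟨rfl, rfl⟩
  rintro Q₁ ⟨hQ₁, hin₁, n₁, h₁⟩ Q₂ ⟨hQ₂, hin₂, n₂, h₂⟩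
  wlog hle : n₁ ≤ n₂ generalizing Q₁ Q₂ n₁ n₂
  · exact (this hQ₂ hin₂ n₂ h₂ hQ₁ hin₁ n₁ h₁ (le_of_not_ge hle)).symm
  obtain ⟨m, rfl⟩ := Int.le.dest hle
  rcases m with _ | m
  · exact hQ₁.eq_of_piEq hQ₂ (h₁.symm.trans (by simpa using h₂))
  have hQ₂Q₁ : PiEq Q₂ (wcomp (witer R h (m + 1)) Q₁) := by
    have hpow := (piEq_zpowWalk_add hRh hRl n₁ (m + 1)).wcomp_congr
      (zpowWalk_getLast? hRh hRl _) hPh (.refl P)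
    rw [wcomp_assoc (zpowWalk_ne_nil hRh hRl n₁)] at hpow
    exact h₂.symm.trans (hpow.trans ((PiEq.refl _).wcomp_congr (witer_getLast? hRh hRl _)
      (hends n₁).1 h₁))
  exact absurd (INCompatible.of_piEq_wcomp_witer hRh hRl hR hRe (h₁.head?_eq ▸ (hends n₁).1)
    (h₁.getLast?_eq ▸ (hends n₁).2) (h₂.getLast?_eq ▸ (hends _).2) hQ₁ hQ₂
    (even_wlen_of_piEq_wcomp_zpowWalk hRh hRl hR hRe hPh hP hPe hQ₁ h₁)
    (even_wlen_of_piEq_wcomp_zpowWalk hRh hRl hR hRe hPh hP hPe hQ₂ h₂) hin₁ hin₂ m hQ₂Q₁) hnR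

end Main

end HRecoloring

/-- If a closed reduced even walk `R` based at `h` does not satisfy the
IN-zigzag pattern, then at most one of the reduced walks `RⁿP`, `n ∈ ℤ`,
satisfies the IN-zigzag pattern; analogously for the OUT-zigzag pattern. -/
theorem statement11 {X : Type} (H : Dgraph X) (h : X) (b : X)
    (R P : List X)
    (hR : IsWalk H h h R) (hRred : IsReduced R) (hReven : Even (wlen R))
    (hP : IsWalk H h b P) (hPred : IsReduced P) (hPeven : Even (wlen P)) :
    (¬ INCompatible H R →
      Set.Subsingleton {Q : List X | IsReduced Q ∧ INCompatible H Q ∧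
        ∃ n : ℤ, PiEq (wcomp (zpowWalk R h n) P) Q}) ∧
    (¬ OUTCompatible H R →
      Set.Subsingleton {Q : List X | IsReduced Q ∧ OUTCompatible H Q ∧
        ∃ n : ℤ, PiEq (wcomp (zpowWalk R h n) P) Q}) := by
  obtain ⟨-, hRh, hRl, -⟩ := hR
  obtain ⟨-, hPh, hPl, -⟩ := hP
  refine ⟨subsingleton_inCompatible_piEq_wcomp_zpowWalk H hRh hRl hRred hReven hPh hPl hPred
    hPeven, fun hnR => ?_⟩
  simp only [outCompatible_iff_inCompatible_reverse] at hnR ⊢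
  exact subsingleton_inCompatible_piEq_wcomp_zpowWalk H.reverse hRh hRl hRred hReven hPh hPl
    hPred hPeven hnR
end

section
/- Let G and H be reflexive undirected graphs, α, β : G → H homomorphisms, and let S be an H-recoloring sequence from α to β (in the Hom₁ sense, so each color change moves a vertex to an adjacent color) satisfying the push-or-pull property. Then for any vertices u, v ∈ V(G) and any walk W from u to v in G, S(v) = α(W)⁻¹ · S(u) · β(W) in π(H). -/
namespace HRecoloring

section Aux

variable {V X : Type}

lemma PiEq.trans' {l1 l2 l3 : List X} (h : PiEq l1 l2) (h' : PiEq l2 l3) : PiEq l1 l3 :=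
  Relation.EqvGen.trans _ _ _ h h'

lemma PiEq.symm' {l1 l2 : List X} (h : PiEq l1 l2) : PiEq l2 l1 :=
  Relation.EqvGen.symm _ _ h

lemma rstep_cons {l l' : List X} (x : X) (h : RStep l l') : RStep (x :: l) (x :: l') := by
  rcases h with ⟨p, s, a, b, h1, h2⟩ | ⟨p, s, a, h1, h2⟩
  · exact Or.inl ⟨x :: p, s, a, b, by simp [h1], by simp [h2]⟩
  · exact Or.inr ⟨x :: p, s, a, by simp [h1], by simp [h2]⟩

lemma rstep_append {l l' : List X} (h : RStep l l') (p t : List X) :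
    RStep (p ++ l ++ t) (p ++ l' ++ t) := by
  rcases h with ⟨q, s, a, b, h1, h2⟩ | ⟨q, s, a, h1, h2⟩
  · exact Or.inl ⟨p ++ q, s ++ t, a, b, by simp [h1], by simp [h2]⟩
  · exact Or.inr ⟨p ++ q, s ++ t, a, by simp [h1], by simp [h2]⟩

lemma piEq_append {l l' : List X} (h : PiEq l l') (p t : List X) :
    PiEq (p ++ l ++ t) (p ++ l' ++ t) := by
  induction h with
  | rel x y hxy => exact Relation.EqvGen.rel _ _ (rstep_append hxy p t)
  | refl x => exact Relation.EqvGen.refl _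
  | symm x y _ ih => exact Relation.EqvGen.symm _ _ ih
  | trans x y z _ _ ih1 ih2 => exact Relation.EqvGen.trans _ _ _ ih1 ih2

lemma piEq_cons {l l' : List X} (x : X) (h : PiEq l l') : PiEq (x :: l) (x :: l') := by
  simpa using piEq_append h [x] []

lemma piEq_bt (x y : X) (t : List X) : PiEq (x :: y :: x :: t) (x :: t) :=
  Relation.EqvGen.rel _ _ (Or.inl ⟨[], t, x, y, rfl, rfl⟩)

lemma piEq_lp (x : X) (t : List X) : PiEq (x :: x :: t) (x :: t) :=
  Relation.EqvGen.rel _ _ (Or.inr ⟨[], t, x, rfl, rfl⟩)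

lemma piEq_lp1 (z x : X) (t : List X) : PiEq (z :: x :: x :: t) (z :: x :: t) :=
  Relation.EqvGen.rel _ _ (Or.inr ⟨[z], t, x, rfl, rfl⟩)

lemma piEq_key (a a' b b' : X) (s : List X)
    (h : (a = a' ∧ b = b') ∨ (a = b ∧ a' = b') ∨ (b = b' ∧ (b = a ∨ b = a')) ∨
      (a = a' ∧ (a = b ∨ a = b'))) :
    PiEq (a :: a' :: b' :: s) (a :: b :: b' :: s) := by
  rcases h with ⟨h1, h2⟩ | ⟨h1, h2⟩ | ⟨h1, h2 | h2⟩ | ⟨h1, h2 | h2⟩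
  · rw [← h1, ← h2]
    exact (piEq_lp a (b :: s)).trans' (piEq_lp1 a b s).symm'
  · rw [← h1, ← h2]
    exact (piEq_lp1 a a' s).trans' (piEq_lp a (a' :: s)).symm'
  · rw [← h1, ← h2]
    exact (piEq_bt b a' s).trans'
      (((piEq_lp b (b :: s)).trans' (piEq_lp b s)).symm')
  · rw [← h1, ← h2]
    exact Relation.EqvGen.refl _
  · rw [← h1, ← h2]
    exact Relation.EqvGen.refl _
  · rw [← h1, ← h2]
    exact ((piEq_lp a (a :: s)).trans' (piEq_lp a s)).trans' (piEq_bt a b s).symm'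

lemma edge_lemma (G : Dgraph V) (β : V → X) (u u' : V) (hu : G.UAdj u u')
    (σs : List (V → X)) : ∀ α : V → X, σs.head? = some α → σs.getLast? = some β →
      σs.Chain' (fun σ σ' => ∃! w, σ w ≠ σ' w) → PushOrPull G σs →
      PiEq (colorWalk σs u') (conj α β [u, u'] (colorWalk σs u)) := by
  induction σs with
  | nil => intro α h; simp at h
  | cons σ rest ih =>
    intro α hh hl hc hp
    have hασ : σ = α := by simpa using hh
    subst hασ
    cases rest with
    | nil =>
      have hβ : σ = β := by simpa using hl
      subst hβ
      have e : conj σ σ [u, u'] (colorWalk [σ] u) = σ u' :: σ u :: σ u' :: [] := by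
        simp [conj, wcomp, colorWalk]
      have e2 : colorWalk [σ] u' = [σ u'] := rfl
      rw [e, e2]
      exact (piEq_bt (σ u') (σ u) []).symm'
    | cons σ' rest' =>
      obtain ⟨hstep, hc'⟩ := List.isChain_cons_cons.mp hc
      obtain ⟨hpstep, hp'⟩ := List.isChain_cons_cons.mp hp
      have hl' : (σ' :: rest').getLast? = some β := by
        rwa [List.getLast?_cons_cons] at hl
      have IH := ih σ' rfl hl' hc' hp'
      have e2 : conj σ' β [u, u'] (colorWalk (σ' :: rest') u)
          = σ' u' :: σ' u :: (rest'.map (fun σ => σ u) ++ [β u']) := by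
        simp [conj, wcomp, colorWalk]
      rw [e2] at IH
      have e1 : conj σ β [u, u'] (colorWalk (σ :: σ' :: rest') u)
          = σ u' :: σ u :: σ' u :: (rest'.map (fun σ => σ u) ++ [β u']) := by
        simp [conj, wcomp, colorWalk]
      have hcw : colorWalk (σ :: σ' :: rest') u' = σ u' :: colorWalk (σ' :: rest') u' := rfl
      rw [hcw, e1]
      have hcond : (σ u' = σ' u' ∧ σ u = σ' u) ∨ (σ u' = σ u ∧ σ' u' = σ' u) ∨
          (σ u = σ' u ∧ (σ u = σ u' ∨ σ u = σ' u')) ∨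
          (σ u' = σ' u' ∧ (σ u' = σ u ∨ σ u' = σ' u)) := by
        obtain ⟨w, hw, hwu⟩ := hstep
        by_cases h1 : σ u = σ' u
        · by_cases h2 : σ u' = σ' u'
          · exact Or.inl ⟨h2, h1⟩
          · exact Or.inr (Or.inr (Or.inl ⟨h1, hpstep u' h2 u (Or.symm hu)⟩))
        · by_cases h2 : σ u' = σ' u'
          · exact Or.inr (Or.inr (Or.inr ⟨h2, hpstep u h1 u' hu⟩))
          · have huu : u = u' := (hwu u h1).trans (hwu u' h2).symm
            subst huu
            exact Or.inr (Or.inl ⟨rfl, rfl⟩)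
      exact (piEq_cons (σ u') IH).trans'
        (piEq_key (σ u') (σ' u') (σ u) (σ' u) _ hcond)

end Aux

end HRecoloring

open HRecoloring
/-- For reflexive undirected graphs and an `H`-recoloring sequence (in the
Hom₁ sense) from `α` to `β` with the push-or-pull property, the vertex walks
satisfy `S(v) = α(W)⁻¹ · S(u) · β(W)` in `π(H)`. -/
theorem statement13 {V X : Type} [Fintype V] [Fintype X]
    (G : Dgraph V) (H : Dgraph X)
    (hGrefl : G.IsReflexive) (hGsym : G.IsSymmetric)
    (hHrefl : H.IsReflexive) (hHsym : H.IsSymmetric)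
    (hGconn : G.WConn) (hHconn : H.WConn)
    (α β : V → X) (σs : List (V → X))
    (hseq : AdjRecolSeq G H σs)
    (hhead : σs.head? = some α) (hlast : σs.getLast? = some β)
    (hpp : PushOrPull G σs)
    (u v : V) (Wl : List V) (hW : IsWalk G u v Wl) :
    PiEq (colorWalk σs v) (conj α β Wl (colorWalk σs u)) := by
  obtain ⟨hne, hhom, hchain⟩ := hseq
  cases σs with
  | nil => simp at hhead
  | cons α₀ σt =>
    have hα : α = α₀ := by simpa using hhead.symm
    subst hα
    have hchainEU : (α :: σt).Chain' (fun σ σ' => ∃! w, σ w ≠ σ' w) :=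
      hchain.imp fun _ _ h => h.1
    revert hW
    induction Wl generalizing u with
    | nil => intro hW; exact absurd rfl hW.1
    | cons w rest ihW =>
      intro hW
      obtain ⟨-, hWh, hWl, hWc⟩ := hW
      have hwu : w = u := by simpa using hWh
      subst hwu
      cases rest with
      | nil =>
        have huv : w = v := by simpa using hWl
        subst huv
        have e : conj α β [w] (colorWalk (α :: σt) w)
            = α w :: σt.map (fun σ => σ w) := by
          simp [conj, wcomp, colorWalk]
        have ecw : colorWalk (α :: σt) w = α w :: σt.map (fun σ => σ w) := rfl
        rw [e, ← ecw]
        exact Relation.EqvGen.refl _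
      | cons w' rest' =>
        have hadj : G.UAdj w w' := (List.isChain_cons_cons.mp hWc).1
        have hW' : IsWalk G w' v (w' :: rest') := by
          refine ⟨List.cons_ne_nil _ _, rfl, ?_, (List.isChain_cons_cons.mp hWc).2⟩
          rwa [List.getLast?_cons_cons] at hWl
        have IH := ihW w' hW'
        have hedge := edge_lemma G β w w' hadj (α :: σt) α rfl hlast hchainEU hpp
        have eC : conj α β (w :: w' :: rest') (colorWalk (α :: σt) w)
            = conj α β (w' :: rest') (conj α β [w, w'] (colorWalk (α :: σt) w)) := by
          simp [conj, wcomp, colorWalk]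
        have eA : conj α β (w' :: rest') (colorWalk (α :: σt) w')
            = (rest'.map α).reverse ++ colorWalk (α :: σt) w' ++ rest'.map β := by
          simp [conj, wcomp, colorWalk]
        have eB : conj α β (w' :: rest') (conj α β [w, w'] (colorWalk (α :: σt) w))
            = (rest'.map α).reverse ++ conj α β [w, w'] (colorWalk (α :: σt) w)
              ++ rest'.map β := by
          simp [conj, wcomp, colorWalk]
        rw [eC, eB]
        refine IH.trans' ?_
        rw [eA]
        exact piEq_append hedge _ _
end

section
/- Let G and H be reflexive undirected graphs, α : G → H a homomorphism, and let C be an α-tight closed walk in G (i.e., the image walk α(C) is cyclically reduced). Then every vertex of C is frozen for every H-recoloring sequence starting at α (in the Hom₁ sense) that satisfies the push-or-pull property; that is, no such sequence ever changes the color of a vertex of C. -/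
/-! Because `α(C)` is cyclically reduced, every vertex `v` of `C` has two neighbours `u`, `w`
on `C` (cyclically its predecessor and successor) with `α u`, `α v`, `α w` pairwise distinct.
While `C` still carries the colouring `α`, push-or-pull would force both `u` and `w` to have the
new colour of `v` whenever `v` is recoloured, contradicting `α u ≠ α w`. Hence, step by step
along the sequence, `C` keeps the colouring `α`. -/

namespace HRecoloring

variable {V X : Type}

theorem IsReduced.getElem_ne_getElem_succ {l : List X} (h : IsReduced l) {i : ℕ}
    (hi : i + 1 < l.length) : l[i] ≠ l[i + 1] := by
  intro heq
  refine h _ (Or.inr ⟨l.take i, l.drop (i + 2), l[i], ?_, rfl⟩)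
  conv_lhs => rw [← List.take_append_drop i l, List.drop_eq_getElem_cons (by omega),
    List.drop_eq_getElem_cons hi, ← heq]
  simp

theorem IsReduced.getElem_ne_getElem_add_two {l : List X} (h : IsReduced l) {i : ℕ}
    (hi : i + 2 < l.length) : l[i] ≠ l[i + 2] := by
  intro heq
  refine h _ (Or.inl ⟨l.take i, l.drop (i + 3), l[i], l[i + 1], ?_, rfl⟩)
  conv_lhs => rw [← List.take_append_drop i l, List.drop_eq_getElem_cons (by omega),
    List.drop_eq_getElem_cons (by omega), List.drop_eq_getElem_cons hi, ← heq]
  simp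

theorem Dgraph.uAdj_comm (G : Dgraph V) {u v : V} : G.UAdj u v ↔ G.UAdj v u :=
  or_comm

theorem IsWalk.exists_neighbors_of_isCycReduced_map {G : Dgraph V} {α : V → X} {v₀ v : V} {C : List V}
    (hC : IsWalk G v₀ v₀ C) (htight : IsCycReduced (C.map α)) (hv : v ∈ C) :
    ∃ u ∈ C, ∃ w ∈ C, G.UAdj v u ∧ G.UAdj v w ∧ α u ≠ α v ∧ α w ≠ α v ∧ α u ≠ α w := by
  obtain ⟨hne, hhead, hlast, hchain⟩ := hC
  obtain ⟨hred, hlen, hcyc⟩ := htight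
  simp only [List.length_map, List.get_eq_getElem, List.getElem_map] at hlen hcyc
  have hadj (i : ℕ) (hi : i + 1 < C.length) : G.UAdj C[i] C[i + 1] :=
    List.isChain_iff_getElem.1 hchain i hi
  have hne1 (i : ℕ) (hi : i + 1 < C.length) : α C[i] ≠ α C[i + 1] := by
    have := hred.getElem_ne_getElem_succ (i := i) (by simpa using hi)
    simpa only [List.getElem_map] using this
  have hne2 (i : ℕ) (hi : i + 2 < C.length) : α C[i] ≠ α C[i + 2] := by
    have := hred.getElem_ne_getElem_add_two (i := i) (by simpa using hi)
    simpa only [List.getElem_map] using this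
  obtain ⟨i, hi, rfl⟩ := List.getElem_of_mem hv
  by_cases hend : i = 0 ∨ i = C.length - 1
  · have hfirst : C[0] = v₀ := by
      simpa [List.head?_eq_getElem?, List.getElem?_eq_getElem (show 0 < C.length by omega)]
        using hhead
    have hlast : C[C.length - 2 + 1] = v₀ := by
      simpa [List.getLast?_eq_getElem?, show C.length - 2 + 1 = C.length - 1 by omega,
        List.getElem?_eq_getElem (show C.length - 1 < C.length by omega)] using hlast
    have hvi : C[i] = v₀ := by
      rcases hend with rfl | rfl
      · exact hfirst
      · simpa [show C.length - 1 = C.length - 2 + 1 by omega] using hlast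
    refine ⟨C[1], List.getElem_mem _, C[C.length - 2], List.getElem_mem _, ?_, ?_, ?_, ?_, hcyc⟩
    · simpa [hvi, hfirst] using hadj 0 (by omega)
    · simpa [hvi, hlast, G.uAdj_comm] using hadj (C.length - 2) (by omega)
    · simpa [hvi, hfirst, eq_comm] using hne1 0 (by omega)
    · simpa [hvi, hlast] using hne1 (C.length - 2) (by omega)
  · obtain ⟨j, rfl⟩ : ∃ j, i = j + 1 := ⟨i - 1, by omega⟩
    refine ⟨C[j], List.getElem_mem _, C[j + 2], List.getElem_mem _, ?_, ?_, ?_, ?_, ?_⟩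
    · exact G.uAdj_comm.1 (hadj j (by omega))
    · exact hadj (j + 1) (by omega)
    · exact hne1 j (by omega)
    · exact (hne1 (j + 1) (by omega)).symm
    · exact hne2 j (by omega)

theorem color_eq_of_pushOrPull_step {G : Dgraph V} {σ σ' : V → X}
    (hstep : ∀ u, σ u ≠ σ' u → ∀ w, G.UAdj u w → σ w = σ u ∨ σ w = σ' u) {u v w : V}
    (hu : G.UAdj v u) (hw : G.UAdj v w) (huv : σ u ≠ σ v) (hwv : σ w ≠ σ v) (huw : σ u ≠ σ w) :
    σ' v = σ v := by
  by_contra hmoved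
  have hu' := (hstep v (Ne.symm hmoved) u hu).resolve_left huv
  have hw' := (hstep v (Ne.symm hmoved) w hw).resolve_left hwv
  exact huw (hu'.trans hw'.symm)

end HRecoloring

open HRecoloring

theorem statement14_general {V X : Type}
    (G : Dgraph V)
    (α : V → X)
    (v₀ : V) (C : List V) (hC : IsWalk G v₀ v₀ C)
    (htight : IsCycReduced (C.map α))
    (σs : List (V → X))
    (hhead : σs.head? = some α) (hpp : PushOrPull G σs) :
    ∀ v ∈ C, ∀ σ ∈ σs, σ v = α v := by
  intro v hv σ hσ
  refine hpp.induction (fun σ => ∀ v ∈ C, σ v = α v) σs ?_ ?_ σ hσ v hv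
  · intro σ σ' hstep hσC v hv
    obtain ⟨u, hu, w, hw, hvu, hvw, huv, hwv, huw⟩ := hC.exists_neighbors_of_isCycReduced_map htight hv
    rw [← hσC u hu, ← hσC v hv] at huv
    rw [← hσC w hw, ← hσC v hv] at hwv
    rw [← hσC u hu, ← hσC w hw] at huw
    rw [color_eq_of_pushOrPull_step hstep hvu hvw huv hwv huw, hσC v hv]
  · intro hne v _
    rw [Option.some_inj.1 ((List.head?_eq_head hne).symm.trans hhead)]

/-- The vertices of an `α`-tight closed walk are frozen for every
`H`-recoloring sequence starting at `α` (in the Hom₁ sense) satisfying the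
push-or-pull property. -/
theorem statement14 {V X : Type} [Fintype V] [Fintype X]
    (G : Dgraph V) (H : Dgraph X)
    (hGrefl : G.IsReflexive) (hGsym : G.IsSymmetric)
    (hHrefl : H.IsReflexive) (hHsym : H.IsSymmetric)
    (hGconn : G.WConn) (hHconn : H.WConn)
    (α : V → X) (hα : IsHom G H α)
    (v₀ : V) (C : List V) (hC : IsWalk G v₀ v₀ C)
    (htight : IsCycReduced (C.map α))
    (σs : List (V → X)) (hseq : AdjRecolSeq G H σs)
    (hhead : σs.head? = some α) (hpp : PushOrPull G σs) :
    ∀ v ∈ C, ∀ σ ∈ σs, σ v = α v :=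
  statement14_general G α v₀ C hC htight σs hhead hpp
end
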